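/- Let 1 < p < 2 and let Z₁,…,Zₙ be independent random variables with |Zᵢ| ≤ bᵢ almost surely, with means aᵢ = E Zᵢ and a = (1/n)∑ᵢ aᵢ. Then for every δ ∈ (0,1), with probability at least 1−δ, |(1/n)∑ᵢ₌₁ⁿ Zᵢ − a| ≤ 3·n^{−1}·(2·log(2/δ))^{1−1/p}·‖b‖_p. -/

import Mathlib

/-!
Split the summands at the threshold `τ = ‖b‖_p / c^{1/p}`, where `c = 2 log (2/δ)`, so that
`∑ (bᵢ/τ)^p = c`. Since `p ≥ 1`, the summands with `bᵢ > τ` satisfy `∑ bᵢ ≤ τ ∑ (bᵢ/τ)^p = τc`,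
so their centred sum is at most `2τc` outright. Since `p ≤ 2`, the others satisfy
`∑ bᵢ² ≤ τ² ∑ (bᵢ/τ)^p = τ²c`, so by Hoeffding's lemma and independence their centred sum is
sub-Gaussian with variance proxy `τ²c` and exceeds `τc` in absolute value with probability at
most `2 exp (-c/2) = δ`. Off that event, `|∑ (Zᵢ - aᵢ)| ≤ 3τc = 3 c^{1-1/p} ‖b‖_p`.
-/

open MeasureTheory ProbabilityTheory Finset Real
open scoped NNReal

namespace ProbabilityTheory.HasSubgaussianMGF

variable {Ω : Type*} {m : MeasurableSpace Ω} {μ : Measure Ω} {X : Ω → ℝ} {c : ℝ≥0}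

lemma mono (h : HasSubgaussianMGF X c μ) {c' : ℝ≥0} (hc : c ≤ c') :
    HasSubgaussianMGF X c' μ where
  integrable_exp_mul := h.integrable_exp_mul
  mgf_le t := (h.mgf_le t).trans <| by gcongr

lemma measure_abs_ge_le (h : HasSubgaussianMGF X c μ) {ε : ℝ} (hε : 0 ≤ ε) :
    μ.real {ω | ε ≤ |X ω|} ≤ 2 * exp (-ε ^ 2 / (2 * c)) := by
  have hsplit : {ω | ε ≤ |X ω|} = {ω | ε ≤ X ω} ∪ {ω | ε ≤ (-X) ω} := by
    ext
    simp [le_abs]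
  calc μ.real {ω | ε ≤ |X ω|} ≤ μ.real {ω | ε ≤ X ω} + μ.real {ω | ε ≤ (-X) ω} :=
        hsplit ▸ measureReal_union_le _ _
    _ ≤ 2 * exp (-ε ^ 2 / (2 * c)) := by
        linarith [h.measure_ge_le hε, h.neg.measure_ge_le hε]

end ProbabilityTheory.HasSubgaussianMGF

section LpSplit

variable {ι : Type*} [Fintype ι] {b : ι → ℝ} {τ p : ℝ}

lemma sum_filter_lt_le_mul_sum_div_rpow (hb : ∀ i, 0 ≤ b i) (hτ : 0 < τ) (hp : 1 ≤ p) :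
    ∑ i with τ < b i, b i ≤ τ * ∑ i, (b i / τ) ^ p := by
  calc ∑ i with τ < b i, b i = τ * ∑ i with τ < b i, b i / τ := by
        rw [mul_sum]
        congr! 1 with i
        field_simp
    _ ≤ τ * ∑ i with τ < b i, (b i / τ) ^ p := by
        refine mul_le_mul_of_nonneg_left (sum_le_sum fun i hi ↦ ?_) hτ.le
        exact self_le_rpow_of_one_le ((one_le_div hτ).2 (mem_filter.1 hi).2.le) hp
    _ ≤ τ * ∑ i, (b i / τ) ^ p := by
        gcongr
        · exact fun i _ _ ↦ rpow_nonneg (div_nonneg (hb i) hτ.le) p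
        · exact filter_subset _ _

lemma sum_filter_le_sq_le_sq_mul_sum_div_rpow (hb : ∀ i, 0 ≤ b i) (hτ : 0 < τ) (hp0 : 0 ≤ p)
    (hp : p ≤ 2) : ∑ i with b i ≤ τ, b i ^ 2 ≤ τ ^ 2 * ∑ i, (b i / τ) ^ p := by
  calc ∑ i with b i ≤ τ, b i ^ 2 = τ ^ 2 * ∑ i with b i ≤ τ, (b i / τ) ^ (2 : ℝ) := by
        rw [mul_sum]
        congr! 1 with i
        rw [rpow_two]
        field_simp
    _ ≤ τ ^ 2 * ∑ i with b i ≤ τ, (b i / τ) ^ p := by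
        refine mul_le_mul_of_nonneg_left (sum_le_sum fun i hi ↦ ?_) (sq_nonneg τ)
        exact rpow_le_rpow_of_exponent_ge' (div_nonneg (hb i) hτ.le)
          ((div_le_one hτ).2 (mem_filter.1 hi).2) hp0 hp
    _ ≤ τ ^ 2 * ∑ i, (b i / τ) ^ p := by
        gcongr
        · exact fun i _ _ ↦ rpow_nonneg (div_nonneg (hb i) hτ.le) p
        · exact filter_subset _ _

end LpSplit

section Deviation

variable {Ω : Type*} {m : MeasurableSpace Ω} {μ : Measure Ω}

lemma nonneg_of_ae_abs_le [NeZero μ] {f : Ω → ℝ} {C : ℝ} (h : ∀ᵐ ω ∂μ, |f ω| ≤ C) : 0 ≤ C :=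
  let ⟨_, hω⟩ := h.exists
  (abs_nonneg _).trans hω

variable [IsProbabilityMeasure μ]

lemma one_sub_measureReal_le_measureReal_of_compl_subset {s t : Set Ω} (h : tᶜ ⊆ s) :
    1 - μ.real t ≤ μ.real s := by
  have : μ.real Set.univ ≤ μ.real (t ∪ s) :=
    measureReal_mono fun ω _ ↦ (em (ω ∈ t)).imp_right (@h ω)
  linarith [measureReal_union_le (μ := μ) t s, probReal_univ (μ := μ)]

lemma ae_abs_sub_integral_le {f : Ω → ℝ} {C : ℝ} (h : ∀ᵐ ω ∂μ, |f ω| ≤ C) :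
    ∀ᵐ ω ∂μ, |f ω - μ[f]| ≤ 2 * C := by
  have hmean : |μ[f]| ≤ C := by
    simpa [Real.norm_eq_abs] using
      norm_integral_le_of_norm_le_const (μ := μ) (f := f) (by simpa [Real.norm_eq_abs] using h)
  filter_upwards [h] with ω hω
  linarith [abs_sub (f ω) μ[f]]

lemma hasSubgaussianMGF_sub_integral_of_abs_le {X : Ω → ℝ} {b : ℝ} (hX : AEMeasurable X μ)
    (h : ∀ᵐ ω ∂μ, |X ω| ≤ b) :
    HasSubgaussianMGF (fun ω ↦ X ω - μ[X]) (b ^ 2).toNNReal μ := by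
  convert hasSubgaussianMGF_of_mem_Icc hX (h.mono fun ω ↦ abs_le.mp)
  ext
  simp only [Real.coe_toNNReal _ (sq_nonneg b), sub_neg_eq_add, NNReal.coe_pow, NNReal.coe_div,
    coe_nnnorm, norm_eq_abs, NNReal.coe_ofNat]
  rw [← two_mul, abs_mul, abs_two, mul_div_cancel_left₀ _ two_ne_zero, sq_abs]

variable {ι : Type*} [Fintype ι] {Z : ι → Ω → ℝ} {b : ι → ℝ} {p c : ℝ}

theorem measureReal_lt_abs_sum_sub_integral_le_of_sum_div_rpow_le
    (hZ : ∀ i, AEMeasurable (Z i) μ) (hindep : iIndepFun Z μ)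
    (hbound : ∀ i, ∀ᵐ ω ∂μ, |Z i ω| ≤ b i) (hp1 : 1 ≤ p) (hp2 : p ≤ 2) {τ : ℝ} (hτ : 0 < τ)
    (hc : 0 < c) (hK : ∑ i, (b i / τ) ^ p ≤ c) :
    μ.real {ω | 3 * (τ * c) < |∑ i, (Z i ω - μ[Z i])|} ≤ 2 * exp (-c / 2) := by
  set Y : ι → Ω → ℝ := fun i ω ↦ Z i ω - μ[Z i]
  have hb : ∀ i, 0 ≤ b i := fun i ↦ nonneg_of_ae_abs_le (hbound i)
  have hYindep : iIndepFun Y μ :=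
    hindep.comp (fun i (x : ℝ) ↦ x - ∫ ω, Z i ω ∂μ) fun _ ↦ measurable_id.sub_const _
  have hlarge : ∀ᵐ ω ∂μ, |∑ i with τ < b i, Y i ω| ≤ 2 * (τ * c) := by
    filter_upwards [ae_all_iff.2 fun i ↦ ae_abs_sub_integral_le (hbound i)] with ω hω
    calc |∑ i with τ < b i, Y i ω| ≤ ∑ i with τ < b i, 2 * b i :=
          (abs_sum_le_sum_abs _ _).trans (sum_le_sum fun i _ ↦ hω i)
      _ ≤ 2 * (τ * c) := by
          rw [← mul_sum]
          gcongr
          exact (sum_filter_lt_le_mul_sum_div_rpow hb hτ hp1).trans (by gcongr)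
  have hsmall : μ.real {ω | τ * c ≤ |∑ i with b i ≤ τ, Y i ω|} ≤ 2 * exp (-c / 2) := by
    have hsubG :
        HasSubgaussianMGF (fun ω ↦ ∑ i with b i ≤ τ, Y i ω) (τ ^ 2 * c).toNNReal μ := by
      refine (HasSubgaussianMGF.sum_of_iIndepFun hYindep fun i _ ↦
        hasSubgaussianMGF_sub_integral_of_abs_le (hZ i) (hbound i)).mono ?_
      rw [← Real.toNNReal_sum_of_nonneg fun i _ ↦ sq_nonneg (b i)]
      exact Real.toNNReal_le_toNNReal <|
        (sum_filter_le_sq_le_sq_mul_sum_div_rpow hb hτ (by linarith) hp2).trans (by gcongr)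
    calc _ ≤ 2 * exp (-(τ * c) ^ 2 / (2 * (τ ^ 2 * c).toNNReal)) :=
          hsubG.measure_abs_ge_le (by positivity)
      _ = 2 * exp (-c / 2) := by
          rw [Real.coe_toNNReal _ (by positivity)]
          congr 2
          field_simp
  calc _ ≤ μ.real {ω | τ * c ≤ |∑ i with b i ≤ τ, Y i ω|} := by
        refine ENNReal.toReal_mono (measure_ne_top _ _) (measure_mono_ae ?_)
        filter_upwards [hlarge] with ω hω hlt
        change 3 * (τ * c) < |∑ i, Y i ω| at hlt
        rw [← sum_filter_add_sum_filter_not univ (fun i ↦ τ < b i)] at hlt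
        simp only [not_lt] at hlt
        show τ * c ≤ _
        linarith [abs_add_le (∑ i with τ < b i, Y i ω) (∑ i with b i ≤ τ, Y i ω)]
    _ ≤ _ := hsmall

theorem measureReal_lt_abs_sum_sub_integral_le
    (hZ : ∀ i, AEMeasurable (Z i) μ) (hindep : iIndepFun Z μ)
    (hbound : ∀ i, ∀ᵐ ω ∂μ, |Z i ω| ≤ b i) (hp1 : 1 ≤ p) (hp2 : p ≤ 2) (hc : 0 < c) :
    μ.real {ω | 3 * c ^ (1 - 1 / p) * (∑ i, b i ^ p) ^ (1 / p) < |∑ i, (Z i ω - μ[Z i])|}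
      ≤ 2 * exp (-c / 2) := by
  have hb : ∀ i, 0 ≤ b i := fun i ↦ nonneg_of_ae_abs_le (hbound i)
  have hsum : 0 ≤ ∑ i, b i ^ p := sum_nonneg fun i _ ↦ rpow_nonneg (hb i) p
  rcases (rpow_nonneg hsum (1 / p)).eq_or_lt with hS | hS
  · have hb0 : ∀ i, b i = 0 := fun i ↦ by
      have := (sum_eq_zero_iff_of_nonneg fun i _ ↦ rpow_nonneg (hb i) p).1
        ((rpow_eq_zero_iff_of_nonneg hsum).1 hS.symm).1 i (mem_univ i)
      exact ((rpow_eq_zero_iff_of_nonneg (hb i)).1 this).1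
    have hnull : ∀ᵐ ω ∂μ, ∑ i, (Z i ω - μ[Z i]) = 0 := by
      filter_upwards [ae_all_iff.2 fun i ↦ ae_abs_sub_integral_le (hbound i)] with ω hω
      exact sum_eq_zero fun i _ ↦ abs_nonpos_iff.1 (by simpa [hb0] using hω i)
    have hzero : μ {ω | 3 * c ^ (1 - 1 / p) * 0 < |∑ i, (Z i ω - μ[Z i])|} = 0 :=
      measure_eq_zero_iff_ae_notMem.2 <| hnull.mono fun ω h ↦ by
        simp only [Set.mem_ofPred_eq, h, abs_zero, mul_zero, lt_irrefl, not_false_eq_true]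
    rw [← hS, measureReal_def, hzero, ENNReal.toReal_zero]
    positivity
  · set S := (∑ i, b i ^ p) ^ (1 / p)
    have hτ : 0 < S / c ^ (1 / p) := div_pos hS (rpow_pos_of_pos hc _)
    have hK : ∑ i, (b i / (S / c ^ (1 / p))) ^ p = c := by
      have hSp : S ^ p = ∑ i, b i ^ p := by
        rw [← rpow_mul hsum, one_div_mul_cancel (by positivity), rpow_one]
      have hcp : (c ^ (1 / p)) ^ p = c := by
        rw [← rpow_mul hc.le, one_div_mul_cancel (by positivity), rpow_one]
      simp_rw [div_rpow (hb _) hτ.le, ← sum_div, div_rpow hS.le (rpow_nonneg hc.le _), hcp, ← hSp]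
      exact div_div_cancel₀ (rpow_pos_of_pos hS p).ne'
    have hM : c ^ (1 - 1 / p) * S = S / c ^ (1 / p) * c := by
      rw [rpow_sub hc, rpow_one]
      ring
    rw [mul_assoc, hM]
    exact measureReal_lt_abs_sum_sub_integral_le_of_sum_div_rpow_le hZ hindep hbound hp1 hp2 hτ hc
      hK.le

end Deviation

theorem stmt3_general {Ω : Type*} [MeasureSpace Ω] [IsProbabilityMeasure (volume : Measure Ω)]
    (p : ℝ) (hp1 : 1 < p) (hp2 : p < 2) (n : ℕ)
    (Z : Fin n → Ω → ℝ) (b : Fin n → ℝ)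
    (hZmeas : ∀ i, Measurable (Z i))
    (hindep : iIndepFun Z volume)
    (hbound : ∀ i, ∀ᵐ ω, |Z i ω| ≤ b i)
    (a : Fin n → ℝ) (ha : ∀ i, a i = ∫ ω, Z i ω)
    (δ : ℝ) (hδ0 : 0 < δ) (hδ1 : δ < 1) :
    1 - δ ≤
      (volume {ω | |(1 / (n : ℝ)) * ∑ i, Z i ω - (1 / (n : ℝ)) * ∑ i, a i| ≤
        3 * (n : ℝ)⁻¹ * (2 * Real.log (2 / δ)) ^ (1 - 1 / p) *
          (∑ i, b i ^ p) ^ (1 / p)}).toReal := by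
  obtain rfl : a = fun i ↦ ∫ ω, Z i ω := funext ha
  set c := 2 * log (2 / δ)
  set M := 3 * c ^ (1 - 1 / p) * (∑ i, b i ^ p) ^ (1 / p)
  have hc : 0 < c := mul_pos two_pos (log_pos (by rw [lt_div_iff₀ hδ0]; linarith))
  have htail := measureReal_lt_abs_sum_sub_integral_le (fun i ↦ (hZmeas i).aemeasurable) hindep
    hbound hp1.le hp2.le hc
  have hδ : 2 * exp (-c / 2) = δ := by
    rw [show -c / 2 = -log (2 / δ) by ring, exp_neg, exp_log (by positivity)]
    field_simp
  calc 1 - δ ≤ 1 - volume.real {ω | M < |∑ i, (Z i ω - ∫ ω', Z i ω')|} := by linarith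
    _ ≤ _ := one_sub_measureReal_le_measureReal_of_compl_subset fun ω hω ↦ ?_
  calc _ = (n : ℝ)⁻¹ * |∑ i, (Z i ω - ∫ ω', Z i ω')| := by
        rw [← mul_sub, ← sum_sub_distrib, abs_mul, one_div, abs_of_nonneg (by positivity)]
    _ ≤ (n : ℝ)⁻¹ * M := by
        gcongr
        exact not_lt.1 hω
    _ = _ := by ring

/-- Confidence form of the ℓ_p Hoeffding-type inequality: for `1 < p < 2`,
independent `Zᵢ` with `|Zᵢ| ≤ bᵢ` a.s., for every `δ ∈ (0,1)`, with probability
at least `1−δ`, `|(1/n)∑ Zᵢ − a| ≤ 3 n⁻¹ (2 log(2/δ))^{1−1/p} ‖b‖_p`. -/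
theorem stmt3 {Ω : Type*} [MeasureSpace Ω] [IsProbabilityMeasure (volume : Measure Ω)]
    (p : ℝ) (hp1 : 1 < p) (hp2 : p < 2) (n : ℕ) (hn : 0 < n)
    (Z : Fin n → Ω → ℝ) (b : Fin n → ℝ) (hb : ∀ i, 0 ≤ b i)
    (hZmeas : ∀ i, Measurable (Z i))
    (hindep : iIndepFun Z volume)
    (hbound : ∀ i, ∀ᵐ ω, |Z i ω| ≤ b i)
    (a : Fin n → ℝ) (ha : ∀ i, a i = ∫ ω, Z i ω)
    (δ : ℝ) (hδ0 : 0 < δ) (hδ1 : δ < 1) :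
    1 - δ ≤
      (volume {ω | |(1 / (n : ℝ)) * ∑ i, Z i ω - (1 / (n : ℝ)) * ∑ i, a i| ≤
        3 * (n : ℝ)⁻¹ * (2 * Real.log (2 / δ)) ^ (1 - 1 / p) *
          (∑ i, b i ^ p) ^ (1 / p)}).toReal :=
  stmt3_general p hp1 hp2 n Z b hZmeas hindep hbound a ha δ hδ0 hδ1
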